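/- arXiv:2305.17981 — 2 statements merged into one kernel-verified Lean document; each statement's English description precedes it below -/
import Mathlib

section
/- For a > 0 real (or complex with Re(a) > 0) and integer n ≥ 1, the Fourier transform (with kernel e^{+i k x}) of the function x ↦ L_{n-1}(2 a x) e^{-a x} on [0, ∞) (extended by zero for x < 0) equals i · (k - i a)^{n-1} / (k + i a)^{n}, where L_m denotes the Laguerre polynomial of degree m. -/
open MeasureTheory Complex

/-- Laguerre polynomials (complex argument), via the standard three-term recurrence. -/
noncomputable def laguerre : ℕ → ℂ → ℂ
  | 0, _ => 1
  | 1, x => 1 - x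
  | n + 2, x => ((2 * (n : ℂ) + 3 - x) * laguerre (n + 1) x
      - ((n : ℂ) + 1) * laguerre n x) / ((n : ℂ) + 2)

/-!
Expanding `L_m(z) = ∑ⱼ (m choose j) (-z)ʲ / j!` (with `m = n - 1`) turns the integrand into a
combination of the functions `xʲ e^{-cx}` with `c = a - i k`, whose integrals over `(0, ∞)` are
`j! / c^{j+1}` (integration by parts). The binomial theorem sums these to `(c - 2a)^m / c^{m+1}`, and
`k - i a = i (c - 2a)`, `k + i a = i c` turn this into the claimed value.
-/

open Set Filter Topology Finset
open scoped Nat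

theorem Nat.choose_laguerre_recurrence (m k : ℕ) :
    (m + 2) * (m + 2).choose (k + 1) + (m + 1) * m.choose (k + 1)
      = (2 * m + 3) * (m + 1).choose (k + 1) + (k + 1) * (m + 1).choose k := by
  have absorb : (m + 1) * m.choose k + k * (m + 1).choose k = (m + 1) * (m + 1).choose k := by
    cases k with
    | zero => simp
    | succ k =>
      rw [mul_comm (k + 1), ← Nat.add_one_mul_choose_eq, Nat.choose_succ_succ' m k]
      ring
  rw [Nat.choose_succ_succ' (m + 1) k, Nat.choose_succ_succ' m k]
  linarith

theorem sum_range_choose_mul_eq_of_lt {m N : ℕ} (f : ℕ → ℂ) (h : m < N) :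
    ∑ j ∈ range (m + 1), (m.choose j : ℂ) * f j = ∑ j ∈ range N, (m.choose j : ℂ) * f j := by
  refine sum_subset (range_subset_range.mpr h) fun j hjN hjm => ?_
  rw [Nat.choose_eq_zero_of_lt (by simpa using hjm), Nat.cast_zero, zero_mul]

theorem sum_choose_mul_laguerre_recurrence {y : ℂ} (t : ℕ → ℂ)
    (ht : ∀ j : ℕ, (j + 1 : ℂ) * t (j + 1) = y * t j) (m : ℕ) :
    (m + 2 : ℂ) * ∑ j ∈ range (m + 2 + 1), ((m + 2).choose j : ℂ) * t j
      = (2 * m + 3 + y) * ∑ j ∈ range (m + 1 + 1), ((m + 1).choose j : ℂ) * t j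
        - (m + 1) * ∑ j ∈ range (m + 1), (m.choose j : ℂ) * t j := by
  have hy : y * ∑ j ∈ range (m + 2), ((m + 1).choose j : ℂ) * t j
      = ∑ j ∈ range (m + 3), ((m + 2 : ℂ) * (m + 2).choose j + (m + 1) * m.choose j
          - (2 * m + 3) * (m + 1).choose j) * t j := by
    rw [sum_range_succ' _ (m + 2), mul_sum]
    simp only [Nat.choose_zero_right, Nat.cast_one]
    rw [show (m + 2 : ℂ) * 1 + (m + 1) * 1 - (2 * m + 3) * 1 = 0 by ring, zero_mul, add_zero]
    refine sum_congr rfl fun k _ => ?_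
    have hk : (m + 2 : ℂ) * (m + 2).choose (k + 1) + (m + 1) * m.choose (k + 1)
        - (2 * m + 3) * (m + 1).choose (k + 1) = (k + 1) * (m + 1).choose k := by
      have := congrArg (Nat.cast : ℕ → ℂ) (Nat.choose_laguerre_recurrence m k)
      push_cast at this
      linear_combination this
    rw [hk, mul_left_comm, ← ht k]
    ring
  rw [add_mul (2 * (m : ℂ) + 3) y, hy, sum_range_choose_mul_eq_of_lt t (by omega : m < m + 3),
    sum_range_choose_mul_eq_of_lt t (by omega : m + 1 < m + 3)]
  simp only [sub_mul, add_mul, sum_add_distrib, sum_sub_distrib, mul_assoc, ← mul_sum]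
  ring

theorem laguerre_eq_sum : ∀ (m : ℕ) (x : ℂ),
    laguerre m x = ∑ j ∈ range (m + 1), (m.choose j : ℂ) * ((-x) ^ j / j !)
  | 0, x => by simp [laguerre]
  | 1, x => by simp [laguerre, sum_range_succ, sub_eq_add_neg]
  | m + 2, x => by
    have shift (j : ℕ) : (j + 1 : ℂ) * ((-x) ^ (j + 1) / (j + 1)!) = -x * ((-x) ^ j / j !) := by
      rw [Nat.factorial_succ, pow_succ]; push_cast
      field_simp
    have recurrence := sum_choose_mul_laguerre_recurrence (fun j => (-x) ^ j / (j ! : ℂ)) shift m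
    rw [laguerre, laguerre_eq_sum (m + 1) x, laguerre_eq_sum m x, div_eq_iff (by norm_cast)]
    linear_combination -recurrence

theorem norm_ofReal_pow_mul_cexp {x : ℝ} (hx : 0 ≤ x) (j : ℕ) (c : ℂ) :
    ‖(x : ℂ) ^ j * cexp (-c * x)‖ = x ^ (j : ℝ) * Real.exp (-c.re * x) := by
  simp [Complex.norm_exp, abs_of_nonneg hx]

theorem tendsto_ofReal_pow_mul_cexp_neg_atTop {c : ℂ} (hc : 0 < c.re) (j : ℕ) :
    Tendsto (fun x : ℝ => (x : ℂ) ^ j * cexp (-c * x)) atTop (𝓝 0) := by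
  refine tendsto_zero_iff_norm_tendsto_zero.mpr <|
    (tendsto_rpow_mul_exp_neg_mul_atTop_nhds_zero j c.re hc).congr' ?_
  filter_upwards [eventually_ge_atTop 0] with x hx
  exact (norm_ofReal_pow_mul_cexp hx j c).symm

theorem integrableOn_ofReal_pow_mul_cexp_neg {c : ℂ} (hc : 0 < c.re) (j : ℕ) :
    IntegrableOn (fun x : ℝ => (x : ℂ) ^ j * cexp (-c * x)) (Ioi 0) := by
  have hreal := integrableOn_rpow_mul_exp_neg_mul_rpow (s := j) (p := 1)
    (by linarith [j.cast_nonneg (α := ℝ)]) one_pos hc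
  simp only [Real.rpow_one] at hreal
  refine hreal.mono' (by fun_prop) (ae_restrict_of_forall_mem measurableSet_Ioi fun x hx => ?_)
  exact (norm_ofReal_pow_mul_cexp (le_of_lt hx) j c).le

theorem mul_integral_ofReal_pow_succ_mul_cexp_neg {c : ℂ} (hc : 0 < c.re) (j : ℕ) :
    c * ∫ x in Ioi (0 : ℝ), (x : ℂ) ^ (j + 1) * cexp (-c * x)
      = (j + 1) * ∫ x in Ioi (0 : ℝ), (x : ℂ) ^ j * cexp (-c * x) := by
  have hderiv (x : ℝ) : HasDerivAt (fun y : ℝ => (y : ℂ) ^ (j + 1) * cexp (-c * y))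
      ((j + 1) * ((x : ℂ) ^ j * cexp (-c * x)) - c * ((x : ℂ) ^ (j + 1) * cexp (-c * x))) x := by
    have hpow := (hasDerivAt_pow (j + 1) (x : ℂ)).comp_ofReal
    have hexp := ((hasDerivAt_id (x : ℂ)).const_mul (-c)).cexp.comp_ofReal
    exact (hpow.mul hexp).congr_deriv (by simp only [id]; push_cast; ring)
  have hint := integrableOn_ofReal_pow_mul_cexp_neg hc
  have hibp := integral_Ioi_of_hasDerivAt_of_tendsto (by fun_prop) (fun x _ => hderiv x)
    (((hint j).const_mul _).sub ((hint (j + 1)).const_mul c))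
    (tendsto_ofReal_pow_mul_cexp_neg_atTop hc (j + 1))
  rw [integral_sub ((hint j).const_mul _) ((hint (j + 1)).const_mul c), integral_const_mul,
    integral_const_mul] at hibp
  simp only [ofReal_zero, zero_pow j.succ_ne_zero, zero_mul, sub_zero, sub_eq_zero] at hibp
  exact hibp.symm

theorem integral_ofReal_pow_mul_cexp_neg {c : ℂ} (hc : 0 < c.re) (j : ℕ) :
    ∫ x in Ioi (0 : ℝ), (x : ℂ) ^ j * cexp (-c * x) = j ! / c ^ (j + 1) := by
  have hc0 : c ≠ 0 := fun h => by simp [h] at hc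
  induction j with
  | zero => simpa using integral_exp_mul_complex_Ioi (a := -c) (by simpa) 0
  | succ j ih =>
    rw [← mul_div_cancel_left₀ (∫ x in Ioi (0 : ℝ), (x : ℂ) ^ (j + 1) * cexp (-c * x)) hc0,
      mul_integral_ofReal_pow_succ_mul_cexp_neg hc j, ih, Nat.factorial_succ]
    push_cast
    field_simp
    ring

theorem integral_laguerre_mul_cexp_neg {c : ℂ} (hc : 0 < c.re) (β : ℂ) (m : ℕ) :
    ∫ x in Ioi (0 : ℝ), laguerre m (β * x) * cexp (-c * x) = (c - β) ^ m / c ^ (m + 1) := by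
  have hc0 : c ≠ 0 := fun h => by simp [h] at hc
  have hterm (x : ℝ) (j : ℕ) : (m.choose j : ℂ) * ((-(β * x)) ^ j / j !) * cexp (-c * x)
      = (m.choose j * (-β) ^ j / j !) * ((x : ℂ) ^ j * cexp (-c * x)) := by ring
  simp_rw [laguerre_eq_sum, sum_mul, hterm]
  rw [integral_finsetSum _ fun j _ => (integrableOn_ofReal_pow_mul_cexp_neg hc j).const_mul _]
  simp_rw [integral_const_mul, integral_ofReal_pow_mul_cexp_neg hc]
  rw [sub_eq_neg_add, add_pow, sum_div]
  refine sum_congr rfl fun j hj => ?_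
  have hjm : j ≤ m := Nat.lt_succ_iff.mp (mem_range.mp hj)
  rw [show m + 1 = (j + 1) + (m - j) by omega, pow_add]
  field_simp [Nat.cast_ne_zero.mpr j.factorial_ne_zero]
  ring

/-- Fourier transform (kernel `e^{+ikx}`) of `x ↦ L_{n-1}(2ax) e^{-ax}` on `[0,∞)`. -/
theorem stmt_0 (a : ℂ) (ha : 0 < a.re) (n : ℕ) (hn : 1 ≤ n) (k : ℝ) :
    ∫ x in Set.Ioi (0 : ℝ),
        laguerre (n - 1) (2 * a * x) * Complex.exp (-a * x) * Complex.exp (I * k * x)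
      = I * ((k : ℂ) - I * a) ^ (n - 1) / ((k : ℂ) + I * a) ^ n := by
  obtain ⟨m, rfl⟩ : ∃ m, n = m + 1 := ⟨n - 1, by omega⟩
  have hc : 0 < (a - I * k).re := by simpa using ha
  have hk_sub : (k : ℂ) - I * a = I * (a - I * k - 2 * a) := by
    linear_combination (k : ℂ) * I_sq
  have hk_add : (k : ℂ) + I * a = I * (a - I * k) := by
    linear_combination (k : ℂ) * I_sq
  calc ∫ x in Ioi (0 : ℝ), laguerre (m + 1 - 1) (2 * a * x) * cexp (-a * x) * cexp (I * k * x)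
      = ∫ x in Ioi (0 : ℝ), laguerre m (2 * a * x) * cexp (-(a - I * k) * x) := by
        rw [Nat.add_sub_cancel]
        congr 1 with x
        rw [mul_assoc, ← Complex.exp_add]
        ring_nf
    _ = (a - I * k - 2 * a) ^ m / (a - I * k) ^ (m + 1) :=
        integral_laguerre_mul_cexp_neg hc (2 * a) m
    _ = I * ((k : ℂ) - I * a) ^ (m + 1 - 1) / ((k : ℂ) + I * a) ^ (m + 1) := by
        rw [Nat.add_sub_cancel, hk_sub, hk_add, mul_pow, mul_pow, pow_succ I]
        field_simp
end

section
/- Let a > 0 and for n, m ≥ 1 let Λ_n(k) = i (k − i a)^{n−1}/(k + i a)^n. Then ∫_{−∞}^{∞} conj(Λ_m(k)) Λ_n(k) dk = (π/a) δ_{mn}, i.e., the spectral basis functions are orthogonal in L²(ℝ) with common norm √(π/a). -/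
open MeasureTheory Complex Filter Topology

/-- Spectral basis functions `Λ_n(k) = i (k - ia)^{n-1} / (k + ia)^n`. -/
noncomputable def Lam (a : ℝ) (n : ℕ) (k : ℝ) : ℂ :=
  Complex.I * ((k : ℂ) - Complex.I * a) ^ (n - 1) / ((k : ℂ) + Complex.I * a) ^ n

namespace LamAux

lemma denom_ne (a : ℝ) (ha : a ≠ 0) (k : ℝ) : ((k : ℂ) + Complex.I * a) ≠ 0 := by
  intro h
  have := congrArg Complex.im h
  simp at this
  exact ha this

lemma num_ne (a : ℝ) (ha : a ≠ 0) (k : ℝ) : ((k : ℂ) - Complex.I * a) ≠ 0 := by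
  intro h
  have := congrArg Complex.im h
  simp at this
  exact ha this

lemma norm_denom_sq (a k : ℝ) : ‖(k : ℂ) + Complex.I * a‖ ^ 2 = k ^ 2 + a ^ 2 := by
  rw [Complex.sq_norm]
  simp [Complex.normSq_apply]
  ring

lemma norm_num_eq (a k : ℝ) : ‖(k : ℂ) - Complex.I * a‖ = ‖(k : ℂ) + Complex.I * a‖ := by
  rw [Complex.norm_def, Complex.norm_def]
  congr 1
  simp [Complex.normSq_apply]

lemma norm_g (a : ℝ) (ha : 0 < a) (r : ℕ) (k : ℝ) :
    ‖((k : ℂ) - Complex.I * a) ^ r / ((k : ℂ) + Complex.I * a) ^ (r + 2)‖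
      = (k ^ 2 + a ^ 2)⁻¹ := by
  have hv : (0:ℝ) < ‖(k : ℂ) + Complex.I * a‖ := by
    simpa using norm_pos_iff.2 (denom_ne a ha.ne' k)
  rw [norm_div, norm_pow, norm_pow, norm_num_eq, pow_add,
    div_mul_eq_div_div, div_self (pow_ne_zero _ hv.ne'), one_div, norm_denom_sq]

lemma integrable_bound (a : ℝ) (ha : 0 < a) :
    Integrable fun k : ℝ => (k ^ 2 + a ^ 2)⁻¹ := by
  apply Integrable.mono' (integrable_inv_one_add_sq.const_mul (min 1 (a ^ 2))⁻¹)
  · exact (Continuous.inv₀ (by continuity) (fun k => by positivity)).aestronglyMeasurable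
  · filter_upwards with k
    have h1 : min 1 (a ^ 2) * (1 + k ^ 2) ≤ k ^ 2 + a ^ 2 := by
      rcases le_total 1 (a ^ 2) with h | h
      · rw [min_eq_left h]; nlinarith [sq_nonneg k]
      · rw [min_eq_right h]; nlinarith [sq_nonneg k, sq_nonneg a]
    have h2 : (k ^ 2 + a ^ 2)⁻¹ ≤ (min 1 (a ^ 2))⁻¹ * (1 + k ^ 2)⁻¹ := by
      rw [← mul_inv]
      exact inv_anti₀ (by positivity) h1
    rw [Real.norm_eq_abs, abs_of_pos (by positivity)]
    exact h2

lemma integrable_g (a : ℝ) (ha : 0 < a) (r : ℕ) :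
    Integrable fun k : ℝ =>
      ((k : ℂ) - Complex.I * a) ^ r / ((k : ℂ) + Complex.I * a) ^ (r + 2) := by
  apply Integrable.mono' (integrable_bound a ha)
  · apply Continuous.aestronglyMeasurable
    exact (by continuity : Continuous fun k : ℝ => ((k : ℂ) - Complex.I * a) ^ r).div
      (by continuity) (fun k => pow_ne_zero _ (denom_ne a ha.ne' k))
  · filter_upwards with k
    rw [norm_g a ha r k]

/-- Key: the off-diagonal integral vanishes. -/
lemma key (a : ℝ) (ha : 0 < a) (r : ℕ) :
    (∫ k : ℝ, ((k : ℂ) - Complex.I * a) ^ r / ((k : ℂ) + Complex.I * a) ^ (r + 2)) = 0 := by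
  set c : ℂ := (((r : ℂ) + 1) * (2 * Complex.I * a))⁻¹ with hc
  set F : ℝ → ℂ := fun k =>
    c * (((k : ℂ) - Complex.I * a) / ((k : ℂ) + Complex.I * a)) ^ (r + 1) with hF
  have hI : (Complex.I : ℂ) ≠ 0 := Complex.I_ne_zero
  have haC : (a : ℂ) ≠ 0 := by exact_mod_cast ha.ne'
  have hr1 : ((r : ℂ) + 1) ≠ 0 := Nat.cast_add_one_ne_zero r
  have hderiv : ∀ k : ℝ, HasDerivAt F
      (((k : ℂ) - Complex.I * a) ^ r / ((k : ℂ) + Complex.I * a) ^ (r + 2)) k := by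
    intro k
    have hk := denom_ne a ha.ne' k
    have h0 : HasDerivAt (fun x : ℝ => (x : ℂ)) 1 k := by
      simpa using (hasDerivAt_id k).ofReal_comp
    have h1 : HasDerivAt (fun x : ℝ => (x : ℂ) - Complex.I * a) 1 k := h0.sub_const _
    have h2 : HasDerivAt (fun x : ℝ => (x : ℂ) + Complex.I * a) 1 k := h0.add_const _
    have h3 : HasDerivAt (fun x : ℝ => ((x : ℂ) - Complex.I * a) / ((x : ℂ) + Complex.I * a))
        ((1 * ((k : ℂ) + Complex.I * a) - ((k : ℂ) - Complex.I * a) * 1)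
          / ((k : ℂ) + Complex.I * a) ^ 2) k := h1.div h2 hk
    have h4 := ((hasDerivAt_pow (r + 1)
        (((k : ℂ) - Complex.I * a) / ((k : ℂ) + Complex.I * a))).comp k h3).const_mul c
    simp only [Function.comp_def] at h4
    refine h4.congr_deriv ?_
    have hs : (1 * ((k : ℂ) + Complex.I * a) - ((k : ℂ) - Complex.I * a) * 1)
        = 2 * Complex.I * a := by ring
    have h5 : (r + 1 - 1 : ℕ) = r := rfl
    have hcast : ((r + 1 : ℕ) : ℂ) = (r : ℂ) + 1 := by push_cast; ring
    rw [hc, hs, h5, div_pow, hcast, pow_add]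
    have hw : (2 : ℂ) * Complex.I * a ≠ 0 := by
      simp [Complex.I_ne_zero, haC]
    field_simp
  have hlim : ∀ l : Filter ℝ, Tendsto (fun k : ℝ => |k|) l atTop → Tendsto F l (𝓝 c) := by
    intro l hl
    have h1 : Tendsto (fun k : ℝ => (2 * Complex.I * a) / ((k : ℂ) + Complex.I * a)) l (𝓝 0) := by
      rw [tendsto_zero_iff_norm_tendsto_zero]
      have hnum : ‖(2 : ℂ) * Complex.I * a‖ = 2 * a := by
        simp [abs_of_pos ha]
      have hb : ∀ᶠ k : ℝ in l, ‖(2 * Complex.I * (a:ℂ)) / ((k : ℂ) + Complex.I * a)‖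
          ≤ (2 * a) / |k| := by
        filter_upwards [hl.eventually_ge_atTop 1] with k hk1
        rw [norm_div, hnum]
        apply div_le_div_of_nonneg_left (by positivity) (by linarith) ?_
        calc |k| = |((k:ℂ) + Complex.I * a).re| := by simp
          _ ≤ ‖(k:ℂ) + Complex.I * a‖ := Complex.abs_re_le_norm _
      have h2 : Tendsto (fun k : ℝ => (2 * a) / |k|) l (𝓝 0) :=
        Tendsto.div_atTop tendsto_const_nhds hl
      exact squeeze_zero' (Filter.Eventually.of_forall fun k => norm_nonneg _) hb h2
    have h2 : Tendsto (fun k : ℝ => ((k : ℂ) - Complex.I * a) / ((k : ℂ) + Complex.I * a))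
        l (𝓝 1) := by
      have : ∀ᶠ k : ℝ in l, ((k : ℂ) - Complex.I * a) / ((k : ℂ) + Complex.I * a)
          = 1 - (2 * Complex.I * a) / ((k : ℂ) + Complex.I * a) := by
        filter_upwards with k
        have hk := denom_ne a ha.ne' k
        field_simp
        ring
      rw [tendsto_congr' this]
      simpa using (tendsto_const_nhds (x := (1:ℂ))).sub h1
    have := (h2.pow (r + 1)).const_mul c
    simpa using this
  have htop : Tendsto F atTop (𝓝 c) := hlim atTop tendsto_abs_atTop_atTop
  have hbot : Tendsto F atBot (𝓝 c) := hlim atBot tendsto_abs_atBot_atTop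
  rw [integral_of_hasDerivAt_of_tendsto hderiv (integrable_g a ha r) hbot htop]
  simp

lemma prod_eq (a : ℝ) (ha : 0 < a) (p q : ℕ) (k : ℝ) :
    starRingEnd ℂ (Lam a (p + 1) k) * Lam a (p + (q + 2)) k
      = ((k : ℂ) - Complex.I * a) ^ q / ((k : ℂ) + Complex.I * a) ^ (q + 2) := by
  have hk := denom_ne a ha.ne' k
  have hk' := num_ne a ha.ne' k
  unfold Lam
  rw [map_div₀, map_mul, map_pow, map_pow, Complex.conj_I, map_sub, map_add,
    Complex.conj_ofReal, map_mul, Complex.conj_I, Complex.conj_ofReal]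
  have e1 : ((k:ℂ) - -Complex.I * a) = (k:ℂ) + Complex.I * a := by ring
  have e2 : ((k:ℂ) + -Complex.I * a) = (k:ℂ) - Complex.I * a := by ring
  rw [e1, e2]
  have h1 : (p + 1 - 1 : ℕ) = p := rfl
  have h2 : (p + (q + 2) - 1 : ℕ) = (p + 1) + q := by omega
  rw [h1, h2, div_mul_div_comm,
    div_eq_div_iff (mul_ne_zero (pow_ne_zero _ hk') (pow_ne_zero _ hk)) (pow_ne_zero _ hk)]
  linear_combination (-(((k:ℂ) + Complex.I * a) ^ p * ((k:ℂ) - Complex.I * a) ^ (p + 1 + q)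
    * ((k:ℂ) + Complex.I * a) ^ (q + 2))) * Complex.I_mul_I

end LamAux

/-- Orthogonality of the spectral basis functions in `L²(ℝ)`:
`∫ conj(Λ_m) Λ_n = (π/a) δ_{mn}`. -/
theorem stmt_16 (a : ℝ) (ha : 0 < a) (m n : ℕ) (hm : 1 ≤ m) (hn : 1 ≤ n) :
    (∫ k : ℝ, starRingEnd ℂ (Lam a m k) * Lam a n k)
      = if m = n then ((Real.pi / a : ℝ) : ℂ) else 0 := by
  have key_lt : ∀ m n : ℕ, 1 ≤ m → 1 ≤ n → m < n →
      (∫ k : ℝ, starRingEnd ℂ (Lam a m k) * Lam a n k) = 0 := by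
    intro m n hm hn hmn
    obtain ⟨p, rfl⟩ : ∃ p, m = p + 1 := ⟨m - 1, by omega⟩
    obtain ⟨q, rfl⟩ : ∃ q, n = p + (q + 2) := ⟨n - p - 2, by omega⟩
    rw [integral_congr_ae (Filter.Eventually.of_forall (LamAux.prod_eq a ha p q))]
    exact LamAux.key a ha q
  rcases lt_trichotomy m n with hlt | rfl | hgt
  · rw [if_neg (Nat.ne_of_lt hlt)]
    exact key_lt m n hm hn hlt
  · rw [if_pos rfl]
    have heq : ∀ k : ℝ, starRingEnd ℂ (Lam a m k) * Lam a m k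
        = (((k ^ 2 + a ^ 2 : ℝ))⁻¹ : ℂ) := by
      intro k
      have hk := LamAux.denom_ne a ha.ne' k
      have hk' := LamAux.num_ne a ha.ne' k
      unfold Lam
      rw [map_div₀, map_mul, map_pow, map_pow, Complex.conj_I, map_sub, map_add,
        Complex.conj_ofReal, map_mul, Complex.conj_I, Complex.conj_ofReal]
      have e1 : ((k:ℂ) - -Complex.I * a) = (k:ℂ) + Complex.I * a := by ring
      have e2 : ((k:ℂ) + -Complex.I * a) = (k:ℂ) - Complex.I * a := by ring
      rw [e1, e2]
      obtain ⟨p, rfl⟩ : ∃ p, m = p + 1 := ⟨m - 1, by omega⟩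
      have h1 : (p + 1 - 1 : ℕ) = p := rfl
      have hprod : ((k:ℂ) - Complex.I * a) * ((k:ℂ) + Complex.I * a)
          = ((k ^ 2 + a ^ 2 : ℝ) : ℂ) := by
        push_cast
        linear_combination (-((a:ℂ) ^ 2)) * Complex.I_mul_I
      rw [h1, ← hprod, inv_eq_one_div, div_mul_div_comm,
        div_eq_div_iff (mul_ne_zero (pow_ne_zero _ hk') (pow_ne_zero _ hk))
          (mul_ne_zero hk' hk)]
      linear_combination (-(((k:ℂ) + Complex.I * a) ^ p * ((k:ℂ) - Complex.I * a) ^ p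
        * ((k:ℂ) - Complex.I * a) * ((k:ℂ) + Complex.I * a))) * Complex.I_mul_I
    rw [integral_congr_ae (Filter.Eventually.of_forall heq)]
    simp_rw [← Complex.ofReal_inv]
    have hreal : (∫ k : ℝ, ((k ^ 2 + a ^ 2)⁻¹ : ℝ)) = Real.pi / a := ?_
    · calc (∫ k : ℝ, (((k ^ 2 + a ^ 2)⁻¹ : ℝ) : ℂ))
          = (((∫ k : ℝ, ((k ^ 2 + a ^ 2)⁻¹ : ℝ)) : ℝ) : ℂ) := integral_ofReal
        _ = _ := by rw [hreal]
    have hsub : (fun k : ℝ => (k ^ 2 + a ^ 2)⁻¹)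
        = fun k : ℝ => (a ^ 2)⁻¹ * (1 + (k / a) ^ 2)⁻¹ := by
      funext k
      rw [← mul_inv]
      congr 1
      field_simp
      ring
    rw [hsub, integral_const_mul,
      MeasureTheory.Measure.integral_comp_div (fun y : ℝ => (1 + y ^ 2)⁻¹) a,
      integral_univ_inv_one_add_sq, abs_of_pos ha, smul_eq_mul]
    field_simp
  · rw [if_neg (Nat.ne_of_gt hgt)]
    have h := key_lt n m hn hm hgt
    have heq2 : (∫ k : ℝ, starRingEnd ℂ (Lam a m k) * Lam a n k)
        = starRingEnd ℂ (∫ k : ℝ, starRingEnd ℂ (Lam a n k) * Lam a m k) := by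
      rw [← integral_conj]
      congr 1
      funext k
      rw [map_mul, Complex.conj_conj]
      ring
    rw [heq2, h, map_zero]
end
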